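/- Let 0 < δ < 1 and let z be a point of the open unit disk D with |1−z| > δ. Then ∫_{δ<|t|<π} (1−|z|²)/|e^{it}−z|² dt ≥ π; equivalently, the harmonic measure at z of the arc E_δ = {e^{it} : δ ≤ |t| ≤ π} in D is at least 1/2. -/

import Mathlib

/-!
Write `z = r e^{iφ}` and `P_r(θ) = (1 - r²) / (1 - 2 r cos θ + r²)`, so that the integrand is
`P_r(t - φ)`. The Poisson formula for the constant function `1` gives total mass `2π`, so it
suffices that the arc `(-δ, δ)` carries mass at most `π`.

On `(-π, π)`, `P_r` has the primitive `2 arctan (k tan (θ / 2))` with `k = (1 + r) / (1 - r)`.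
If `|φ| < δ`, the mass of the arc is `2 arctan (k tan x) + 2 arctan (k tan y)` with
`x, y = (δ ± φ) / 2`, which is at most `π` as soon as `k² tan x tan y ≤ 1`, i.e.
`2 r cos φ ≤ (1 + r²) cos δ`; this follows from `|1 - z|² = 1 - 2 r cos φ + r² > δ²` and
`1 - cos δ ≤ δ² / 2`. If `|φ| ≥ δ`, then since `P_r` decreases in `|θ|` on `[-π, π]`, moving the
arc to `[0, 2δ]` only increases its mass, which is `2 arctan (k tan δ) < π`.
-/

open MeasureTheory Real

noncomputable def polarPoissonKernel (r θ : ℝ) : ℝ := (1 - r ^ 2) / (1 - 2 * r * cos θ + r ^ 2)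

lemma arctan_add_arctan_le_pi_div_two {a b : ℝ} (ha : 0 < a) (hab : a * b ≤ 1) :
    arctan a + arctan b ≤ π / 2 := by
  have h : arctan b ≤ arctan a⁻¹ :=
    arctan_strictMono.monotone (by rw [← one_div, le_div_iff₀ ha]; linarith)
  rw [arctan_inv_of_pos ha] at h
  linarith

lemma integral_abs_mem_Ioo {E : Type*} [NormedAddCommGroup E] [NormedSpace ℝ E] {f : ℝ → E}
    {a b : ℝ} (ha : 0 ≤ a) (hab : a ≤ b) (hf : IntervalIntegrable f volume (-b) b) :
    ∫ t in {t : ℝ | a < |t| ∧ |t| < b}, f t = (∫ t in -b..b, f t) - ∫ t in -a..a, f t := by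
  have hset : {t : ℝ | a < |t| ∧ |t| < b} = Set.Ioo (-b) (-a) ∪ Set.Ioo a b := by
    ext t
    simp only [Set.mem_ofPred_eq, Set.mem_union, Set.mem_Ioo, lt_abs, abs_lt]
    grind
  have hsub {c d : ℝ} (hc : -b ≤ c) (hcd : c ≤ d) (hd : d ≤ b) : IntervalIntegrable f volume c d :=
    hf.mono_set (by
      rw [Set.uIcc_of_le hcd, Set.uIcc_of_le (by linarith)]
      exact Set.Icc_subset_Icc hc hd)
  have hIoo {c d : ℝ} (hcd : c ≤ d) : ∫ t in Set.Ioo c d, f t = ∫ t in c..d, f t := by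
    rw [intervalIntegral.integral_of_le hcd, integral_Ioc_eq_integral_Ioo]
  have hdisj : Disjoint (Set.Ioo (-b) (-a)) (Set.Ioo a b) :=
    Set.disjoint_left.mpr fun t h1 h2 => by linarith [h1.2, h2.1]
  have hba : -b ≤ -a := by linarith
  have haa : -a ≤ a := by linarith
  rw [hset, setIntegral_union hdisj measurableSet_Ioo
    ((intervalIntegrable_iff_integrableOn_Ioo_of_le hba).mp (hsub le_rfl hba (by linarith)))
    ((intervalIntegrable_iff_integrableOn_Ioo_of_le hab).mp (hsub (by linarith) hab le_rfl)),
    hIoo hba, hIoo hab,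
    ← intervalIntegral.integral_add_adjacent_intervals (b := a) (hsub le_rfl (hba.trans haa) hab)
      (hsub (by linarith) hab le_rfl),
    ← intervalIntegral.integral_add_adjacent_intervals (b := -a) (hsub le_rfl hba (by linarith))
      (hsub hba haa hab)]
  abel

lemma one_sub_two_mul_mul_cos_add_sq (r θ : ℝ) :
    1 - 2 * r * cos θ + r ^ 2 = (1 - r) ^ 2 * cos (θ / 2) ^ 2 + (1 + r) ^ 2 * sin (θ / 2) ^ 2 := by
  have h := cos_sq_add_sin_sq (θ / 2)
  rw [show θ = 2 * (θ / 2) by ring, cos_two_mul, show 2 * (θ / 2) / 2 = θ / 2 by ring]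
  linear_combination (-(1 + r) ^ 2) * h

section PolarPoissonKernel

variable {r : ℝ}

lemma one_sub_two_mul_mul_cos_add_sq_pos (hr0 : 0 ≤ r) (hr1 : r < 1) (θ : ℝ) :
    0 < 1 - 2 * r * cos θ + r ^ 2 := by
  nlinarith [cos_le_one θ, sq_nonneg (1 - r)]

lemma continuous_polarPoissonKernel (hr0 : 0 ≤ r) (hr1 : r < 1) :
    Continuous (polarPoissonKernel r) :=
  continuous_const.div (by fun_prop) fun θ => (one_sub_two_mul_mul_cos_add_sq_pos hr0 hr1 θ).ne'

lemma hasDerivAt_two_mul_arctan_mul_tan_half (hr1 : r < 1) {θ : ℝ} (hθ : θ ∈ Set.Ioo (-π) π) :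
    HasDerivAt (fun θ => 2 * arctan ((1 + r) / (1 - r) * tan (θ / 2)))
      (polarPoissonKernel r θ) θ := by
  have hc : 0 < cos (θ / 2) := cos_pos_of_mem_Ioo ⟨by linarith [hθ.1], by linarith [hθ.2]⟩
  have h := ((((hasDerivAt_tan hc.ne').comp θ ((hasDerivAt_id θ).div_const 2)).const_mul
    ((1 + r) / (1 - r))).arctan).const_mul 2
  refine h.congr_deriv ?_
  have h1r : 1 - r ≠ 0 := by linarith
  simp only [Function.comp_apply, id]
  rw [polarPoissonKernel, one_sub_two_mul_mul_cos_add_sq, tan_eq_sin_div_cos]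
  field_simp
  ring

lemma polarPoissonKernel_le_of_cos_le (hr0 : 0 ≤ r) (hr1 : r < 1) {θ θ' : ℝ}
    (h : cos θ' ≤ cos θ) : polarPoissonKernel r θ' ≤ polarPoissonKernel r θ :=
  div_le_div_of_nonneg_left (by nlinarith) (one_sub_two_mul_mul_cos_add_sq_pos hr0 hr1 θ)
    (by nlinarith)

lemma integral_polarPoissonKernel (hr0 : 0 ≤ r) (hr1 : r < 1) {a b : ℝ}
    (ha : a ∈ Set.Ioo (-π) π) (hb : b ∈ Set.Ioo (-π) π) :
    ∫ θ in a..b, polarPoissonKernel r θ =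
      2 * arctan ((1 + r) / (1 - r) * tan (b / 2)) - 2 * arctan ((1 + r) / (1 - r) * tan (a / 2)) :=
  intervalIntegral.integral_eq_sub_of_hasDerivAt
    (fun _ hθ =>
      hasDerivAt_two_mul_arctan_mul_tan_half hr1 (Set.ordConnected_Ioo.uIcc_subset ha hb hθ))
    ((continuous_polarPoissonKernel hr0 hr1).intervalIntegrable a b)

lemma integral_polarPoissonKernel_neg_center (φ δ : ℝ) :
    ∫ θ in -φ - δ..-φ + δ, polarPoissonKernel r θ =
      ∫ θ in φ - δ..φ + δ, polarPoissonKernel r θ := by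
  rw [show -φ - δ = -(φ + δ) by ring, show -φ + δ = -(φ - δ) by ring,
    ← intervalIntegral.integral_comp_neg]
  simp only [polarPoissonKernel, cos_neg]

lemma integral_polarPoissonKernel_le_pi_of_cos_le (hr0 : 0 ≤ r) (hr1 : r < 1) {φ δ : ℝ}
    (hφ : |φ| < δ) (hδ : δ < π / 2) (hcos : 2 * r * cos φ ≤ (1 + r ^ 2) * cos δ) :
    ∫ θ in φ - δ..φ + δ, polarPoissonKernel r θ ≤ π := by
  obtain ⟨x, y, rfl, rfl⟩ : ∃ x y, φ = x - y ∧ δ = x + y :=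
    ⟨(φ + δ) / 2, (δ - φ) / 2, by ring, by ring⟩
  obtain ⟨hyx, hxy⟩ := abs_lt.mp hφ
  have hx : x ∈ Set.Ioo 0 (π / 2) := ⟨by linarith, by linarith⟩
  have hy : y ∈ Set.Ioo 0 (π / 2) := ⟨by linarith, by linarith⟩
  rw [integral_polarPoissonKernel hr0 hr1 ⟨by linarith, by linarith⟩ ⟨by linarith, by linarith⟩,
    show (x - y - (x + y)) / 2 = -y by ring, show (x - y + (x + y)) / 2 = x by ring, tan_neg,
    mul_neg, arctan_neg]
  have hcx := cos_pos_of_mem_Ioo ⟨by linarith [hx.1], hx.2⟩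
  have hcy := cos_pos_of_mem_Ioo ⟨by linarith [hy.1], hy.2⟩
  have hprod : (1 + r) / (1 - r) * tan x * ((1 + r) / (1 - r) * tan y) ≤ 1 := by
    rw [cos_sub, cos_add] at hcos
    have h1r : 0 < 1 - r := by linarith
    rw [tan_eq_sin_div_cos, tan_eq_sin_div_cos, div_mul_div_comm, div_mul_div_comm,
      div_mul_div_comm, div_le_one (by positivity)]
    nlinarith
  have hpos : 0 < (1 + r) / (1 - r) * tan x :=
    mul_pos (div_pos (by linarith) (by linarith)) (tan_pos_of_pos_of_lt_pi_div_two hx.1 hx.2)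
  linarith [arctan_add_arctan_le_pi_div_two hpos hprod]

lemma integral_polarPoissonKernel_add_le (hr0 : 0 ≤ r) (hr1 : r < 1) {a L : ℝ} (ha : 0 ≤ a)
    (hL : 0 ≤ L) (haL : a + L / 2 ≤ π) :
    ∫ θ in a..a + L, polarPoissonKernel r θ ≤ ∫ θ in 0..L, polarPoissonKernel r θ := by
  have hcont := continuous_polarPoissonKernel hr0 hr1
  have htail : ∫ θ in L..a + L, polarPoissonKernel r θ ≤ ∫ θ in 0..a, polarPoissonKernel r θ := by
    have hshift :=
      intervalIntegral.integral_comp_add_right (a := 0) (b := a) (polarPoissonKernel r) L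
    rw [zero_add] at hshift
    rw [← hshift]
    refine intervalIntegral.integral_mono_on ha
      ((hcont.comp (continuous_add_const L)).intervalIntegrable 0 a) (hcont.intervalIntegrable 0 a)
      fun x hx => polarPoissonKernel_le_of_cos_le hr0 hr1 ?_
    have hsum := cos_sub_cos x (x + L)
    rw [show (x + (x + L)) / 2 = x + L / 2 by ring, show (x - (x + L)) / 2 = -(L / 2) by ring,
      sin_neg] at hsum
    have h1 := sin_nonneg_of_nonneg_of_le_pi (x := x + L / 2) (by linarith [hx.1])
      (by linarith [hx.2])
    have h2 := sin_nonneg_of_nonneg_of_le_pi (x := L / 2) (by linarith) (by linarith [hx.1])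
    nlinarith
  have h1 := intervalIntegral.integral_add_adjacent_intervals
    (hcont.intervalIntegrable (μ := volume) 0 a) (hcont.intervalIntegrable a (a + L))
  have h2 := intervalIntegral.integral_add_adjacent_intervals
    (hcont.intervalIntegrable (μ := volume) 0 L) (hcont.intervalIntegrable L (a + L))
  linarith

lemma integral_polarPoissonKernel_le_pi_of_le (hr0 : 0 ≤ r) (hr1 : r < 1) {φ δ : ℝ} (hδ0 : 0 ≤ δ)
    (hδ : δ < π / 2) (hδφ : δ ≤ φ) (hφ : φ ≤ π) :
    ∫ θ in φ - δ..φ + δ, polarPoissonKernel r θ ≤ π :=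
  calc ∫ θ in φ - δ..φ + δ, polarPoissonKernel r θ
      ≤ ∫ θ in 0..2 * δ, polarPoissonKernel r θ := by
        simpa only [show φ - δ + 2 * δ = φ + δ by ring] using
          integral_polarPoissonKernel_add_le hr0 hr1 (a := φ - δ) (L := 2 * δ) (by linarith)
            (by linarith) (by linarith)
    _ = 2 * arctan ((1 + r) / (1 - r) * tan δ) := by
        rw [integral_polarPoissonKernel hr0 hr1 ⟨by linarith [pi_pos], pi_pos⟩
          ⟨by linarith [pi_pos], by linarith⟩]
        simp
    _ ≤ π := by linarith [arctan_lt_pi_div_two ((1 + r) / (1 - r) * tan δ)]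

lemma integral_polarPoissonKernel_le_pi (hr0 : 0 ≤ r) (hr1 : r < 1) {φ δ : ℝ} (hδ0 : 0 ≤ δ)
    (hδ : δ < π / 2) (hφ : |φ| ≤ π) (hdist : δ ^ 2 ≤ 1 - 2 * r * cos φ + r ^ 2) :
    ∫ θ in φ - δ..φ + δ, polarPoissonKernel r θ ≤ π := by
  rcases lt_or_ge |φ| δ with hnear | hfar
  · refine integral_polarPoissonKernel_le_pi_of_cos_le hr0 hr1 hnear hδ ?_
    have hr2 : r ^ 2 ≤ 1 := by nlinarith
    nlinarith [one_sub_sq_div_two_le_cos (x := δ), mul_le_mul_of_nonneg_right hr2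
      (sub_nonneg.mpr (cos_le_one δ))]
  obtain ⟨hφl, hφr⟩ := abs_le.mp hφ
  rcases le_abs.mp hfar with hδφ | hδφ
  · exact integral_polarPoissonKernel_le_pi_of_le hr0 hr1 hδ0 hδ hδφ hφr
  · rw [← integral_polarPoissonKernel_neg_center]
    exact integral_polarPoissonKernel_le_pi_of_le hr0 hr1 hδ0 hδ hδφ (by linarith)

end PolarPoissonKernel

lemma norm_exp_mul_I_sub_sq (z : ℂ) (t : ℝ) :
    ‖Complex.exp (t * Complex.I) - z‖ ^ 2 = 1 - 2 * ‖z‖ * cos (t - Complex.arg z) + ‖z‖ ^ 2 := by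
  rw [Complex.sq_norm, Complex.normSq_sub, Complex.normSq_eq_norm_sq, Complex.normSq_eq_norm_sq,
    Complex.norm_exp_ofReal_mul_I, cos_sub]
  simp only [Complex.mul_re, Complex.conj_re, Complex.conj_im, Complex.exp_ofReal_mul_I_re,
    Complex.exp_ofReal_mul_I_im]
  rw [← Complex.norm_mul_cos_arg z, ← Complex.norm_mul_sin_arg z]
  ring

lemma poissonKernel_eq_polarPoissonKernel (z : ℂ) (t : ℝ) :
    (1 - ‖z‖ ^ 2) / ‖Complex.exp (t * Complex.I) - z‖ ^ 2 =
      polarPoissonKernel ‖z‖ (t - Complex.arg z) := by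
  rw [norm_exp_mul_I_sub_sq, polarPoissonKernel]

lemma integral_poissonKernel_unitDisk_eq_two_pi {z : ℂ} (hz : z ∈ Metric.ball (0 : ℂ) 1) :
    ∫ t in -π..π, (1 - ‖z‖ ^ 2) / ‖Complex.exp (t * Complex.I) - z‖ ^ 2 = 2 * π := by
  have h := (InnerProductSpace.harmonicOnNhd_const (1 : ℝ)).circleAverage_poissonKernel_smul
    (c := 0) (R := 1) hz
  rw [circleAverage_eq_integral_add (-π), intervalIntegral.integral_comp_add_right
    (fun θ => (poissonKernel 0 z • fun _ => (1 : ℝ)) (circleMap 0 1 θ))] at h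
  simp only [poissonKernel, circleMap, Pi.smul_apply', smul_eq_mul, mul_one, Complex.ofReal_one,
    one_mul, zero_add, sub_zero, Complex.norm_exp_ofReal_mul_I, one_pow] at h
  rw [show 2 * π + -π = π by ring] at h
  field_simp at h
  linarith

/-- If `0 < δ < 1` and `z ∈ 𝔻` with `|1-z| > δ`, then
`∫_{δ<|t|<π} (1-|z|²)/|e^{it}-z|² dt ≥ π`, i.e. the harmonic measure of the
arc `E_δ = {e^{it} : δ ≤ |t| ≤ π}` at `z` is at least `1/2`. -/
theorem harmonic_measure_ge_half
    (δ : ℝ) (hδ0 : 0 < δ) (hδ1 : δ < 1)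
    (z : ℂ) (hz : z ∈ Metric.ball (0 : ℂ) 1)
    (hz1 : δ < ‖1 - z‖) :
    Real.pi ≤ ∫ t in {t : ℝ | δ < |t| ∧ |t| < Real.pi},
      (1 - ‖z‖ ^ 2) / ‖Complex.exp (t * Complex.I) - z‖ ^ 2 := by
  have hr0 : 0 ≤ ‖z‖ := norm_nonneg z
  have hr1 : ‖z‖ < 1 := mem_ball_zero_iff.mp hz
  have hδπ : δ < π / 2 := by linarith [pi_gt_three]
  have hK : (fun t : ℝ => (1 - ‖z‖ ^ 2) / ‖Complex.exp (t * Complex.I) - z‖ ^ 2) =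
      fun t => polarPoissonKernel ‖z‖ (t - Complex.arg z) :=
    funext (poissonKernel_eq_polarPoissonKernel z)
  have hcont : Continuous fun t : ℝ => (1 - ‖z‖ ^ 2) / ‖Complex.exp (t * Complex.I) - z‖ ^ 2 :=
    hK ▸ (continuous_polarPoissonKernel hr0 hr1).comp (continuous_sub_right _)
  have hdist : δ ^ 2 ≤ 1 - 2 * ‖z‖ * cos (-Complex.arg z) + ‖z‖ ^ 2 := by
    have h0 := norm_exp_mul_I_sub_sq z 0
    rw [Complex.ofReal_zero, zero_mul, Complex.exp_zero, zero_sub] at h0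
    exact h0 ▸ (pow_lt_pow_left₀ hz1 hδ0.le two_ne_zero).le
  have harc := integral_polarPoissonKernel_le_pi hr0 hr1 hδ0.le hδπ
    (by rw [abs_neg]; exact Complex.abs_arg_le_pi z) hdist
  rw [integral_abs_mem_Ioo hδ0.le (by linarith) (hcont.intervalIntegrable _ _),
    integral_poissonKernel_unitDisk_eq_two_pi hz, hK, intervalIntegral.integral_comp_sub_right]
  rw [show -Complex.arg z - δ = -δ - Complex.arg z by ring,
    show -Complex.arg z + δ = δ - Complex.arg z by ring] at harc
  linarith
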